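/- For every integer N ≥ 1 and all a = (a₁,a₂), b = (b₁,b₂) ∈ ℤ², the commutator satisfies [T_a, T_b] = T_a T_b − T_b T_a = (N/π) · sin(π(a₂b₁ − a₁b₂)/N) · T_{a+b}; in particular the structure constants of this basis are C(a,b) = (N/π)·sin(π(a₂b₁ − a₁b₂)/N). -/

import Mathlib

/-! The relation `Λ Q = e_N(1) Q Λ` makes `e_N(1)` the commutator of the generators, so in
`GL(N,ℂ)` one has `Λ^m Q^n = e_N(nm) Q^n Λ^m`. Hence `T_a T_b = (N/(2πi)) e^{iθ} T_{a+b}` with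
`θ = π(a₂b₁ − a₁b₂)/N`, and swapping `a, b` replaces `θ` by `−θ`; the commutator is
`(N/(2πi)) (e^{iθ} − e^{−iθ}) T_{a+b} = (N/π) sin θ · T_{a+b}`. -/

open Complex

noncomputable section

/-- `e_N(x) = exp(2πi x / N)`. -/
def eN (N : ℕ) (x : ℂ) : ℂ := Complex.exp (2 * (Real.pi : ℂ) * I * x / N)

/-- The diagonal matrix `Q = diag(e_N(1), …, e_N(N))`. -/
def Qmat (N : ℕ) : Matrix (Fin N) (Fin N) ℂ :=
  Matrix.diagonal fun j => eN N ((j : ℕ) + 1)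

/-- The cyclic shift matrix `Λ`, with `Λ_{j,k} = 1` iff `k ≡ j + 1 (mod N)`. -/
def Lmat (N : ℕ) : Matrix (Fin N) (Fin N) ℂ :=
  Matrix.of fun j k => if (k : ℕ) = ((j : ℕ) + 1) % N then 1 else 0

/-- `T_a = (N/(2πi)) · exp(πi a₁ a₂ / N) · Q^{a₁} Λ^{a₂}`, powers taken as integer powers
(`zpow` of nonsingular matrices, i.e. powers in `GL(N,ℂ)`). -/
def Tmat (N : ℕ) (a : ℤ × ℤ) : Matrix (Fin N) (Fin N) ℂ :=
  (((N : ℂ) / (2 * (Real.pi : ℂ) * I)) *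
      Complex.exp ((Real.pi : ℂ) * I * ((a.1 * a.2 : ℤ) : ℂ) / N)) •
    (Qmat N ^ a.1 * Lmat N ^ a.2)

theorem zpow_mul_zpow_of_mul_eq_mul_mul {G : Type*} [Group G] {q l z : G}
    (hzq : Commute z q) (hzl : Commute z l) (h : l * q = z * q * l) (m n : ℤ) :
    l ^ m * q ^ n = z ^ (n * m) * q ^ n * l ^ m := by
  have hl : l * q ^ n = q ^ n * (z ^ n * l) := by
    rw [(SemiconjBy.zpow_right h n).eq, hzq.mul_zpow, (hzq.zpow_zpow n n).eq, mul_assoc]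
  rw [← (SemiconjBy.zpow_right hl.symm m).eq, (hzl.zpow_left n).mul_zpow, ← zpow_mul,
    ← mul_assoc, ((hzq.zpow_zpow (n * m) n).eq)]

namespace Matrix

variable {n K : Type*} [Fintype n] [DecidableEq n] [Field K]

theorem zpow_mul_zpow_of_mul_eq_smul {A B : Matrix n n K} {c : K} (hA : IsUnit A.det)
    (hB : IsUnit B.det) (hc : c ≠ 0) (h : B * A = c • (A * B)) (j k : ℤ) :
    B ^ j * A ^ k = c ^ (k * j) • (A ^ k * B ^ j) := by
  -- Matrix `zpow` agrees with `zpow` in the unit group, where the group lemma applies.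
  lift A to (Matrix n n K)ˣ using (isUnit_iff_isUnit_det A).mpr hA
  lift B to (Matrix n n K)ˣ using (isUnit_iff_isUnit_det B).mpr hB
  let z : (Matrix n n K)ˣ := Units.map (algebraMap K (Matrix n n K)) (Units.mk0 c hc)
  have hz (i : ℤ) : ((z ^ i : (Matrix n n K)ˣ) : Matrix n n K) = algebraMap K _ (c ^ i) := by
    simp [z, ← map_zpow]
  have hcentral (u : (Matrix n n K)ˣ) : Commute z u :=
    Units.ext (Algebra.commutes c (u : Matrix n n K))
  have hrel : B * A = z * A * B := Units.ext (by simpa [z, Algebra.smul_def, mul_assoc] using h)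
  rw [← coe_units_zpow, ← coe_units_zpow, ← Units.val_mul,
    zpow_mul_zpow_of_mul_eq_mul_mul (hcentral A) (hcentral B) hrel, mul_assoc, Units.val_mul,
    hz, ← Algebra.smul_def, Units.val_mul]

theorem zpow_mul_zpow_mul_zpow_mul_zpow {A B : Matrix n n K} {c : K} (hA : IsUnit A.det)
    (hB : IsUnit B.det) (hc : c ≠ 0) (h : B * A = c • (A * B)) (i j k l : ℤ) :
    A ^ i * B ^ j * (A ^ k * B ^ l) = c ^ (k * j) • (A ^ (i + k) * B ^ (j + l)) := by
  rw [zpow_add hA, zpow_add hB, mul_assoc, ← mul_assoc (B ^ j),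
    zpow_mul_zpow_of_mul_eq_smul hA hB hc h, smul_mul_assoc, mul_smul_comm]
  simp only [mul_assoc]

end Matrix

theorem Complex.exp_mul_I_sub_exp_neg_mul_I (θ : ℂ) :
    exp (θ * I) - exp (-θ * I) = 2 * I * sin θ := by
  rw [exp_mul_I, exp_mul_I, cos_neg, sin_neg]
  ring

theorem eN_add (N : ℕ) (x y : ℂ) : eN N (x + y) = eN N x * eN N y := by
  rw [eN, eN, eN, ← Complex.exp_add, mul_add, add_div]

theorem eN_add_natCast_mul (N k : ℕ) (x : ℂ) : eN N (x + N * k) = eN N x := by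
  rcases eq_or_ne N 0 with rfl | hN
  · simp
  have hperiod : eN N (N * k) = 1 := by
    rw [eN, ← Complex.exp_nat_mul_two_pi_mul_I k]
    field_simp
  rw [eN_add, hperiod, mul_one]

theorem eN_natCast_mod (N m : ℕ) : eN N ((m % N : ℕ) : ℂ) = eN N m := by
  conv_rhs => rw [← Nat.mod_add_div m N]
  push_cast
  exact (eN_add_natCast_mul N (m / N) _).symm

theorem eN_one_zpow (N : ℕ) (k : ℤ) : eN N 1 ^ k = eN N k := by
  rw [eN, eN, ← Complex.exp_int_mul]
  ring_nf

theorem isUnit_det_Qmat (N : ℕ) : IsUnit (Qmat N).det := by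
  rw [Qmat, Matrix.det_diagonal]
  exact isUnit_iff_ne_zero.mpr (Finset.prod_ne_zero_iff.mpr fun _ _ => Complex.exp_ne_zero _)

section

variable {N : ℕ} [NeZero N]

theorem Lmat_eq_permMatrix : Lmat N = (Equiv.addRight (1 : Fin N)).permMatrix ℂ := by
  ext j k
  simp [Lmat, PEquiv.toMatrix_apply, Fin.ext_iff, Fin.val_add, eq_comm]

theorem isUnit_det_Lmat : IsUnit (Lmat N).det := by
  simp [Lmat_eq_permMatrix]

theorem Lmat_mul_Qmat : Lmat N * Qmat N = eN N 1 • (Qmat N * Lmat N) := by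
  ext j k
  rw [Qmat, Matrix.mul_diagonal, Matrix.smul_apply, Matrix.diagonal_mul, Lmat_eq_permMatrix]
  simp only [PEquiv.toMatrix_apply, Equiv.toPEquiv_apply, Equiv.coe_addRight, Option.mem_some_iff,
    smul_eq_mul, ite_mul, mul_ite, one_mul, mul_one, zero_mul, mul_zero]
  split_ifs with hk
  · rw [← hk, Fin.val_add, Fin.val_one', Nat.add_mod_mod, eN_add, eN_natCast_mod, mul_comm]
    push_cast
    rfl
  · rfl

end

theorem Tmat_mul (N : ℕ) (a b : ℤ × ℤ) :
    Tmat N a * Tmat N b =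
      ((N : ℂ) / (2 * (Real.pi : ℂ) * I) *
          exp ((Real.pi : ℂ) * I * ((a.2 * b.1 - a.1 * b.2 : ℤ) : ℂ) / N)) •
        Tmat N (a + b) := by
  rcases eq_or_ne N 0 with rfl | hN
  · exact Subsingleton.elim _ _
  have : NeZero N := ⟨hN⟩
  rw [Tmat, Tmat, Tmat, smul_mul_smul_comm, Matrix.zpow_mul_zpow_mul_zpow_mul_zpow (c := eN N 1)
    (isUnit_det_Qmat N) isUnit_det_Lmat (exp_ne_zero _) Lmat_mul_Qmat, smul_smul, smul_smul,
    Prod.fst_add, Prod.snd_add, eN_one_zpow]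
  congr 1
  have hexponent : (Real.pi : ℂ) * I * ((a.1 * a.2 : ℤ) : ℂ) / N +
        (Real.pi : ℂ) * I * ((b.1 * b.2 : ℤ) : ℂ) / N +
        2 * (Real.pi : ℂ) * I * ((b.1 * a.2 : ℤ) : ℂ) / N =
      (Real.pi : ℂ) * I * ((a.2 * b.1 - a.1 * b.2 : ℤ) : ℂ) / N +
        (Real.pi : ℂ) * I * (((a.1 + b.1) * (a.2 + b.2) : ℤ) : ℂ) / N := by
    push_cast
    ring
  rw [eN, mul_mul_mul_comm, mul_assoc, ← exp_add, ← exp_add, hexponent, exp_add]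
  ring

theorem Tmat_commutator_general (N : ℕ) (a b : ℤ × ℤ) :
    Tmat N a * Tmat N b - Tmat N b * Tmat N a =
      (((N : ℂ) / (Real.pi : ℂ)) *
          Complex.sin ((Real.pi : ℂ) * ((a.2 * b.1 - a.1 * b.2 : ℤ) : ℂ) / N)) •
        Tmat N (a + b) := by
  rw [Tmat_mul, Tmat_mul, add_comm b a, ← sub_smul]
  congr 1
  set θ : ℂ := (Real.pi : ℂ) * ((a.2 * b.1 - a.1 * b.2 : ℤ) : ℂ) / N
  have hθ : (Real.pi : ℂ) * I * ((a.2 * b.1 - a.1 * b.2 : ℤ) : ℂ) / N = θ * I := by ring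
  have hθ' : (Real.pi : ℂ) * I * ((b.2 * a.1 - b.1 * a.2 : ℤ) : ℂ) / N = -θ * I := by
    simp only [θ]; push_cast; ring
  rw [hθ, hθ', ← mul_sub, exp_mul_I_sub_exp_neg_mul_I]
  field_simp

/-- For every `N ≥ 1` and all `a, b ∈ ℤ²`, the commutator satisfies
`[T_a, T_b] = T_a T_b − T_b T_a = (N/π) · sin(π(a₂b₁ − a₁b₂)/N) · T_{a+b}`;
the structure constants are `C(a,b) = (N/π)·sin(π(a₂b₁ − a₁b₂)/N)`. -/
theorem Tmat_commutator (N : ℕ) (hN : 1 ≤ N) (a b : ℤ × ℤ) :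
    Tmat N a * Tmat N b - Tmat N b * Tmat N a =
      (((N : ℂ) / (Real.pi : ℂ)) *
          Complex.sin ((Real.pi : ℂ) * ((a.2 * b.1 - a.1 * b.2 : ℤ) : ℂ) / N)) •
        Tmat N (a + b) :=
  Tmat_commutator_general N a b
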